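/- Let Γ ⊆ Γ' be closed subspaces of a complex Hilbert space Ĥ and β = Γ' ∩ Γ^⊥. If M is a closed subspace of Ĥ such that Γ + M is closed in Ĥ, then γ_!M = γ(M ∩ Γ') is a closed subspace of β. -/

import Mathlib

noncomputable section

open Classical in
/-- Orthogonal projection onto a closed (complete) submodule, as a continuous linear map
on the ambient space (defined to be `0` on non-complete submodules). -/
noncomputable def orthProj {W : Type*} [NormedAddCommGroup W] [InnerProductSpace ℂ W]
    (M : Submodule ℂ W) : W →L[ℂ] W :=
  if h : IsComplete (M : Set W) then
    haveI : CompleteSpace M := h.completeSpace_coe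
    M.subtypeL.comp (M.orthogonalProjectionOnto)
  else 0

/-- `(M, N)` is a Fredholm pair of subspaces of `W`: the sum is closed, the intersection
is finite-dimensional and the sum has finite codimension. -/
def FredholmPair {W : Type*} [NormedAddCommGroup W] [InnerProductSpace ℂ W]
    (M N : Submodule ℂ W) : Prop :=
  IsClosed ((M ⊔ N : Submodule ℂ W) : Set W) ∧
  FiniteDimensional ℂ ↥(M ⊓ N) ∧
  FiniteDimensional ℂ (W ⧸ (M ⊔ N))

/-- `(M, N)` is a transversal pair of subspaces of `W`. -/
def TransversalPair {W : Type*} [NormedAddCommGroup W] [InnerProductSpace ℂ W]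
    (M N : Submodule ℂ W) : Prop :=
  M ⊓ N = ⊥ ∧ M ⊔ N = ⊤

/-- `(L, N)` is a Fredholm pair of subspaces of the subspace `β` of `W` (the codimension
is computed inside `β`). -/
def FredholmPairIn {W : Type*} [NormedAddCommGroup W] [InnerProductSpace ℂ W]
    (β L N : Submodule ℂ W) : Prop :=
  IsClosed ((L ⊔ N : Submodule ℂ W) : Set W) ∧
  FiniteDimensional ℂ ↥(L ⊓ N) ∧
  FiniteDimensional ℂ (↥β ⧸ Submodule.comap β.subtype (L ⊔ N))

/-- `(L, N)` is a transversal pair of subspaces of the subspace `β` of `W`. -/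
def TransversalPairIn {W : Type*} [NormedAddCommGroup W] [InnerProductSpace ℂ W]
    (β L N : Submodule ℂ W) : Prop :=
  L ⊓ N = ⊥ ∧ L ⊔ N = β

/-- The push-forward `γ_!M = γ(M ∩ Γ')`, where `β = Γ' ∩ Γ^⊥` and `γ` is the restriction
to `Γ'` of the orthogonal projection onto `β`. -/
def gammaPush {W : Type*} [NormedAddCommGroup W] [InnerProductSpace ℂ W]
    (Γ Γ' M : Submodule ℂ W) : Submodule ℂ W :=
  (M ⊓ Γ').map (orthProj (Γ' ⊓ Γᗮ) : W →ₗ[ℂ] W)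

/-- `M` is Fredholm with respect to `(Γ, Γ')`: the pair `(M, Γ)` is lower semi-Fredholm
and the pair `(M, Γ')` is upper semi-Fredholm. -/
def FredholmWrt {W : Type*} [NormedAddCommGroup W] [InnerProductSpace ℂ W]
    (Γ Γ' M : Submodule ℂ W) : Prop :=
  (IsClosed ((M ⊔ Γ : Submodule ℂ W) : Set W) ∧ FiniteDimensional ℂ ↥(M ⊓ Γ)) ∧
  (IsClosed ((M ⊔ Γ' : Submodule ℂ W) : Set W) ∧ FiniteDimensional ℂ (W ⧸ (M ⊔ Γ')))

/-- `M` is transversal to `(Γ, Γ')`: `M + Γ` is closed, `M ∩ Γ = 0` and `M + Γ' = W`. -/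
def TransversalWrt {W : Type*} [NormedAddCommGroup W] [InnerProductSpace ℂ W]
    (Γ Γ' M : Submodule ℂ W) : Prop :=
  IsClosed ((M ⊔ Γ : Submodule ℂ W) : Set W) ∧ M ⊓ Γ = ⊥ ∧ M ⊔ Γ' = ⊤

/-- for closed subspaces `Γ ⊆ Γ'` of a complex Hilbert space with
`β = Γ' ∩ Γ^⊥`, if `M` is a closed subspace with `Γ + M` closed, then
`γ_!M = γ(M ∩ Γ')` is a closed subspace of `β`. -/
theorem statement_8
    {W : Type*} [NormedAddCommGroup W] [InnerProductSpace ℂ W] [CompleteSpace W]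
    (Γ Γ' M : Submodule ℂ W)
    (hΓ : IsClosed ((Γ : Submodule ℂ W) : Set W))
    (hΓ' : IsClosed ((Γ' : Submodule ℂ W) : Set W))
    (hle : Γ ≤ Γ')
    (hM : IsClosed ((M : Submodule ℂ W) : Set W))
    (hsum : IsClosed ((Γ ⊔ M : Submodule ℂ W) : Set W)) :
    IsClosed ((gammaPush Γ Γ' M : Submodule ℂ W) : Set W) := by
  have hβc : IsClosed ((Γ' ⊓ Γᗮ : Submodule ℂ W) : Set W) := by
    rw [Submodule.coe_inf]
    exact hΓ'.inter Γ.isClosed_orthogonal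
  set β : Submodule ℂ W := Γ' ⊓ Γᗮ with hβ
  have hβcomp : IsComplete (β : Set W) := hβc.isComplete
  haveI : CompleteSpace β := hβcomp.completeSpace_coe
  haveI : CompleteSpace Γ := hΓ.completeSpace_coe
  have horth : ∀ x : W, orthProj β x = (β.orthogonalProjectionOnto x : W) := by
    intro x
    rw [orthProj, dif_pos hβcomp]
    rfl
  have hΓβ : Γ ≤ βᗮ := by
    refine le_trans Γ.le_orthogonal_orthogonal (Submodule.orthogonal_le ?_)
    exact inf_le_right
  have hsplit : Γ ⊔ Γᗮ ⊓ Γ' = Γ' := Submodule.sup_orthogonal_inf_of_hasOrthogonalProjection hle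
  have key : gammaPush Γ Γ' M = (Γ ⊔ M) ⊓ β := by
    ext x
    constructor
    · rintro ⟨m, hm, rfl⟩
      rw [ContinuousLinearMap.coe_coe, horth]
      obtain ⟨g, hg, b, hb, hgb⟩ := Submodule.mem_sup.mp (hsplit ▸ hm.2)
      have hb' : b ∈ β := ⟨hb.2, hb.1⟩
      have : (β.orthogonalProjectionOnto m : W) = b := by
        rw [← hgb, map_add,
          Submodule.orthogonalProjectionOnto_apply_of_mem_orthogonal (hΓβ hg),
          Submodule.coe_add, Submodule.coe_zero, zero_add,
          show ((β.orthogonalProjectionOnto b : W)) = b from Submodule.starProjection_eq_self_iff.mpr hb']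
      rw [this]
      refine ⟨Submodule.mem_sup.mpr ⟨-g, Γ.neg_mem hg, m, hm.1, ?_⟩, hb'⟩
      rw [← hgb]; abel
    · rintro ⟨hx1, hx2⟩
      obtain ⟨g, hg, m, hm, rfl⟩ := Submodule.mem_sup.mp hx1
      have hmΓ' : m ∈ Γ' := by
        have := Γ'.sub_mem hx2.1 (hle hg)
        simpa using this
      refine ⟨m, ⟨hm, hmΓ'⟩, ?_⟩
      rw [ContinuousLinearMap.coe_coe, horth]
      have hmx : m = (g + m) - g := by abel
      conv_lhs => rw [hmx]
      rw [map_sub, Submodule.coe_sub, show ((β.orthogonalProjectionOnto (g + m) : W)) = g + m from Submodule.starProjection_eq_self_iff.mpr hx2,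
        Submodule.orthogonalProjectionOnto_apply_of_mem_orthogonal (hΓβ hg)]
      simp
  rw [key]
  rw [Submodule.coe_inf]
  exact hsum.inter hβc
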